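/- Let F be a graph with v(F) > 2 and e(F) ≥ 2 such that F is strictly balanced with m_2(F) > 1, and let C_0, C_1 > 0 with C_0 n^{-1/m_2(F)} ≤ p ≤ C_1 n^{-1/m_2(F)}. Then for any proper subgraph F_0 ⊊ F with e(F_0) ≥ 1 and any such p, the quantity n^{2v(F)-v(F_0)-3} p^{2e(F)-e(F_0)-2} is at most C' · n^{-(1 - 1/m_2(F))} for some constant C' depending only on F, C_0, C_1; in particular it tends to 0 as n → ∞. -/

import Mathlib

/-!
Writing `m = m₂(F)`, strict balancedness gives `e(F) - 1 = m (v(F) - 2)` and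
`e(F₀) - 1 ≤ m (v(F₀) - 2)`. Hence `m (2v(F) - v(F₀) - 2) ≤ 2e(F) - e(F₀) - 1`, which is exactly
the statement that the exponent of `n` in `n^{2v(F)-v(F₀)-3} (C₁ n^{-1/m})^{2e(F)-e(F₀)-2}`
is at most `-(1 - 1/m)`.
-/

open SimpleGraph

/-- The 2-density of a subgraph: `(e(H) - 1)/(v(H) - 2)` when `v(H) > 2`, and `1` otherwise
(in particular `d₂(K₂) = 1`). -/
noncomputable def d2 {V : Type*} {G : SimpleGraph V} (H : G.Subgraph) : ℝ :=
  if 2 < H.verts.ncard then ((H.edgeSet.ncard : ℝ) - 1) / ((H.verts.ncard : ℝ) - 2) else 1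

/-- The maximum 2-density `m₂(G)`, the supremum of `d₂` over subgraphs with at least one edge. -/
noncomputable def m2 {V : Type*} (G : SimpleGraph V) : ℝ :=
  sSup {x : ℝ | ∃ H : G.Subgraph, H.edgeSet.Nonempty ∧ d2 H = x}

/-- `G` is strictly balanced: `d₂(G) = m₂(G)` and all proper subgraphs with at least one edge
have strictly smaller 2-density. -/
def StrictlyBalanced {V : Type*} (G : SimpleGraph V) : Prop :=
  d2 (⊤ : G.Subgraph) = m2 G ∧
    ∀ H : G.Subgraph, H ≠ ⊤ → H.edgeSet.Nonempty → d2 H < m2 G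

namespace SimpleGraph.Subgraph

variable {V : Type*} {G : SimpleGraph V}

theorem two_le_ncard_verts {H : G.Subgraph} (hH : H.edgeSet.Nonempty) (hfin : H.verts.Finite) :
    2 ≤ H.verts.ncard := by
  obtain ⟨z, hz⟩ := hH
  induction z using Sym2.ind with
  | _ a b =>
    have hab : H.Adj a b := hz
    calc 2 = ({a, b} : Set V).ncard := (Set.ncard_pair hab.ne).symm
      _ ≤ H.verts.ncard :=
        Set.ncard_le_ncard (Set.pair_subset hab.fst_mem hab.snd_mem) hfin

theorem edgeSet_subset_of_verts_eq_pair {H : G.Subgraph} {x y : V} (hxy : H.verts = {x, y}) :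
    H.edgeSet ⊆ {s(x, y)} := by
  intro z hz
  induction z using Sym2.ind with
  | _ a b =>
    have hab : H.Adj a b := hz
    have ha := hab.fst_mem
    have hb := hab.snd_mem
    rw [hxy] at ha hb
    rcases ha with rfl | rfl <;> rcases hb with rfl | rfl
    all_goals first | exact absurd rfl hab.ne | simp [Sym2.eq_swap]

theorem ncard_edgeSet_le_one_of_ncard_verts_eq_two {H : G.Subgraph} (h2 : H.verts.ncard = 2) :
    H.edgeSet.ncard ≤ 1 := by
  obtain ⟨x, y, -, hxy⟩ := Set.ncard_eq_two.mp h2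
  calc H.edgeSet.ncard ≤ ({s(x, y)} : Set (Sym2 V)).ncard :=
        Set.ncard_le_ncard (edgeSet_subset_of_verts_eq_pair hxy) (Set.finite_singleton _)
    _ = 1 := Set.ncard_singleton _

theorem ncard_edgeSet_sub_one_le_d2_mul {H : G.Subgraph} (hH : H.edgeSet.Nonempty)
    (hfin : H.verts.Finite) :
    (H.edgeSet.ncard : ℝ) - 1 ≤ d2 H * ((H.verts.ncard : ℝ) - 2) := by
  rcases (two_le_ncard_verts hH hfin).lt_or_eq with hlt | heq
  · have hpos : (0 : ℝ) < (H.verts.ncard : ℝ) - 2 := by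
      rw [sub_pos]; exact_mod_cast hlt
    rw [d2, if_pos hlt, div_mul_cancel₀ _ hpos.ne']
  · rw [← heq, Nat.cast_two, sub_self, mul_zero, sub_nonpos, Nat.cast_le_one]
    exact ncard_edgeSet_le_one_of_ncard_verts_eq_two heq.symm

end SimpleGraph.Subgraph

namespace StrictlyBalanced

variable {V : Type*} [Fintype V] {F : SimpleGraph V}

theorem ncard_edgeSet_sub_one_eq (hsb : StrictlyBalanced F) (hv : 2 < Fintype.card V) :
    (F.edgeSet.ncard : ℝ) - 1 = m2 F * ((Fintype.card V : ℝ) - 2) := by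
  have hpos : (0 : ℝ) < (Fintype.card V : ℝ) - 2 := by
    rw [sub_pos]; exact_mod_cast hv
  rw [← hsb.1, d2, Subgraph.verts_top, Subgraph.edgeSet_top, Set.ncard_univ,
    Nat.card_eq_fintype_card, if_pos hv, div_mul_cancel₀ _ hpos.ne']

theorem ncard_edgeSet_sub_one_le (hsb : StrictlyBalanced F) {F0 : F.Subgraph} (hne : F0 ≠ ⊤)
    (hF0 : F0.edgeSet.Nonempty) :
    (F0.edgeSet.ncard : ℝ) - 1 ≤ m2 F * ((F0.verts.ncard : ℝ) - 2) := by
  have hv0 : (2 : ℝ) ≤ F0.verts.ncard := by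
    exact_mod_cast Subgraph.two_le_ncard_verts hF0 (Set.toFinite _)
  calc (F0.edgeSet.ncard : ℝ) - 1 ≤ d2 F0 * ((F0.verts.ncard : ℝ) - 2) :=
        Subgraph.ncard_edgeSet_sub_one_le_d2_mul hF0 (Set.toFinite _)
    _ ≤ m2 F * ((F0.verts.ncard : ℝ) - 2) :=
        mul_le_mul_of_nonneg_right (hsb.2 F0 hne hF0).le (by linarith)

theorem m2_mul_le (hsb : StrictlyBalanced F) (hv : 2 < Fintype.card V)
    (he : 2 ≤ F.edgeSet.ncard) {F0 : F.Subgraph} (hne : F0 ≠ ⊤) (hF0 : F0.edgeSet.Nonempty) :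
    m2 F * (((2 * Fintype.card V - F0.verts.ncard - 3 : ℕ) : ℝ) + 1)
      ≤ ((2 * F.edgeSet.ncard - F0.edgeSet.ncard - 2 : ℕ) : ℝ) + 1 := by
  have hv0 : F0.verts.ncard ≤ Fintype.card V := by
    simpa [Set.ncard_univ] using Set.ncard_le_ncard (Set.subset_univ F0.verts)
  have he0 : F0.edgeSet.ncard ≤ F.edgeSet.ncard :=
    Set.ncard_le_ncard (Subgraph.edgeSet_subset F0) (Set.toFinite _)
  have hA : (((2 * Fintype.card V - F0.verts.ncard - 3 : ℕ) : ℝ) + 1)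
      = 2 * ((Fintype.card V : ℝ) - 2) - ((F0.verts.ncard : ℝ) - 2) := by
    rw [Nat.cast_sub (by omega), Nat.cast_sub (by omega)]; push_cast; ring
  have hB : ((2 * F.edgeSet.ncard - F0.edgeSet.ncard - 2 : ℕ) : ℝ) + 1
      = 2 * ((F.edgeSet.ncard : ℝ) - 1) - ((F0.edgeSet.ncard : ℝ) - 1) := by
    rw [Nat.cast_sub (by omega), Nat.cast_sub (by omega)]; push_cast; ring
  rw [hA, hB, mul_sub, mul_left_comm, ← hsb.ncard_edgeSet_sub_one_eq hv]
  linarith [hsb.ncard_edgeSet_sub_one_le hne hF0]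

end StrictlyBalanced

theorem pow_mul_pow_le_rpow_of_le_mul_rpow {n p C m : ℝ} {A B : ℕ} (hn : 1 ≤ n) (hm : 0 < m)
    (hp : 0 ≤ p) (hpC : p ≤ C * n ^ (-(1 / m))) (hAB : m * ((A : ℝ) + 1) ≤ (B : ℝ) + 1) :
    n ^ A * p ^ B ≤ C ^ B * n ^ (-(1 - 1 / m)) := by
  have hn0 : 0 < n := one_pos.trans_le hn
  have hexp : (A : ℝ) + -(1 / m) * B ≤ -(1 - 1 / m) := by
    have : (A : ℝ) + 1 ≤ ((B : ℝ) + 1) / m := (le_div_iff₀' hm).2 hAB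
    rw [add_div] at this
    linarith [show -(1 / m) * (B : ℝ) = -(B / m) by ring]
  calc n ^ A * p ^ B ≤ n ^ A * (C * n ^ (-(1 / m))) ^ B := by gcongr
    _ = C ^ B * n ^ ((A : ℝ) + -(1 / m) * B) := by
        rw [Real.rpow_add hn0, Real.rpow_mul hn0.le, Real.rpow_natCast, Real.rpow_natCast, mul_pow]
        ring
    _ ≤ C ^ B * n ^ (-(1 - 1 / m)) := by
        have hC : 0 ≤ C := nonneg_of_mul_nonneg_left (hp.trans hpC) (by positivity)
        gcongr

theorem stmt_16_general {V : Type*} [Fintype V] (F : SimpleGraph V)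
    (hv : 2 < Fintype.card V) (he : 2 ≤ F.edgeSet.ncard)
    (hsb : StrictlyBalanced F) (hm : 1 < m2 F)
    (C0 C1 : ℝ) (h0 : 0 < C0) :
    ∃ C' : ℝ, 0 < C' ∧ ∀ F0 : F.Subgraph, F0 ≠ ⊤ → F0.edgeSet.Nonempty →
      ∀ n : ℕ, 1 ≤ n → ∀ p : ℝ,
        C0 * (n : ℝ) ^ (-(1 / m2 F)) ≤ p → p ≤ C1 * (n : ℝ) ^ (-(1 / m2 F)) →
        (n : ℝ) ^ (2 * Fintype.card V - F0.verts.ncard - 3) *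
            p ^ (2 * F.edgeSet.ncard - F0.edgeSet.ncard - 2)
          ≤ C' * (n : ℝ) ^ (-(1 - 1 / m2 F)) := by
  refine ⟨max 1 C1 ^ (2 * F.edgeSet.ncard), by positivity, ?_⟩
  intro F0 hne hF0 n hn p hp0 hp1
  have hn1 : (1 : ℝ) ≤ n := by exact_mod_cast hn
  have hp : 0 ≤ p := le_trans (by positivity) hp0
  have hC1 : 0 ≤ C1 := nonneg_of_mul_nonneg_left (hp.trans hp1) (by positivity)
  calc _ ≤ C1 ^ (2 * F.edgeSet.ncard - F0.edgeSet.ncard - 2) * (n : ℝ) ^ (-(1 - 1 / m2 F)) :=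
        pow_mul_pow_le_rpow_of_le_mul_rpow hn1 (one_pos.trans hm) hp hp1
          (hsb.m2_mul_le hv he hne hF0)
    _ ≤ _ := by
        gcongr
        calc C1 ^ _ ≤ max 1 C1 ^ (2 * F.edgeSet.ncard - F0.edgeSet.ncard - 2) :=
            pow_le_pow_left₀ hC1 (le_max_right _ _) _
          _ ≤ _ := pow_le_pow_right₀ (le_max_left _ _) (by omega)

/-- Key estimate for bad embeddings of type (B2): for strictly balanced `F` with `m₂(F) > 1`,
`v(F) > 2`, `e(F) ≥ 2` and `C₀ n^{-1/m₂(F)} ≤ p ≤ C₁ n^{-1/m₂(F)}`, for every proper subgraph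
`F₀ ⊊ F` with at least one edge the quantity `n^{2v(F)-v(F₀)-3} p^{2e(F)-e(F₀)-2}` is at most
`C' · n^{-(1-1/m₂(F))}` for a constant `C'` depending only on `F`, `C₀`, `C₁`. -/
theorem stmt_16 {V : Type*} [Fintype V] (F : SimpleGraph V)
    (hv : 2 < Fintype.card V) (he : 2 ≤ F.edgeSet.ncard)
    (hsb : StrictlyBalanced F) (hm : 1 < m2 F)
    (C0 C1 : ℝ) (h0 : 0 < C0) (h01 : C0 ≤ C1) :
    ∃ C' : ℝ, 0 < C' ∧ ∀ F0 : F.Subgraph, F0 ≠ ⊤ → F0.edgeSet.Nonempty →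
      ∀ n : ℕ, 1 ≤ n → ∀ p : ℝ,
        C0 * (n : ℝ) ^ (-(1 / m2 F)) ≤ p → p ≤ C1 * (n : ℝ) ^ (-(1 / m2 F)) →
        (n : ℝ) ^ (2 * Fintype.card V - F0.verts.ncard - 3) *
            p ^ (2 * F.edgeSet.ncard - F0.edgeSet.ncard - 2)
          ≤ C' * (n : ℝ) ^ (-(1 - 1 / m2 F)) :=
  stmt_16_general F hv he hsb hm C0 C1 h0
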